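/- There exists a voting method F whose domain is the set of all profiles with two or three alternatives such that F satisfies anonymity, neutrality, weak positive responsiveness, positive involvement, near immunity to spoilers, and homogeneity, F violates block preservation, and there is a profile P in the domain with F(P) ≠ Minimax(P). -/

import Mathlib

/-!
Formalization of notions from "An extension of May's Theorem to three
alternatives: axiomatizing Minimax voting" by Holliday and Pacuit.

The set of voters is the countably infinite set `ℕ`; the set `α` of
alternatives is a type (assumed to have at least three elements where the
paper assumes `|𝒳| ≥ 3`).
-/

namespace MayMinimax

/-- A profile: a finite set of voters drawn from the countably infinite set `ℕ`
of all voters, a finite set of alternatives, and, for each voter, a binary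
relation on alternatives given as a Boolean-valued function:
`P.rel i a b = true` means that voter `i` ranks `a` above `b`. -/
structure Profile (α : Type*) where
  voters : Finset ℕ
  alts : Finset α
  rel : ℕ → α → α → Bool

variable {α : Type*} [DecidableEq α]

/-- Each voter's ballot is a strict weak order (asymmetric and negatively
transitive) on the alternatives. -/
def IsSWO (P : Profile α) : Prop :=
  ∀ i ∈ P.voters,
    (∀ a ∈ P.alts, ∀ b ∈ P.alts, P.rel i a b = true → P.rel i b a = false) ∧
    (∀ a ∈ P.alts, ∀ b ∈ P.alts, ∀ c ∈ P.alts,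
      P.rel i a b = false → P.rel i b c = false → P.rel i a c = false)

/-- The margin of `a` over `b` in `P`: the number of voters ranking `a` above
`b` minus the number of voters ranking `b` above `a`. -/
def Margin (P : Profile α) (a b : α) : ℤ :=
  ((P.voters.filter fun i => P.rel i a b = true).card : ℤ) -
    ((P.voters.filter fun i => P.rel i b a = true).card : ℤ)

/-- The number of voters ranking `a` above `b` in `P`. -/
def Support (P : Profile α) (a b : α) : ℕ :=
  (P.voters.filter fun i => P.rel i a b = true).card

/-- The Minimax score of `a`: the maximum margin of any other alternative over `a`. -/
def MMScore (P : Profile α) (a : α) : ℤ :=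
  WithBot.unbotD 0 (((P.alts.erase a).image fun b => Margin P b a).max)

/-- The set of Minimax winners: alternatives with minimal Minimax score. -/
def Minimax (P : Profile α) : Finset α :=
  P.alts.filter fun a => ∀ b ∈ P.alts, MMScore P a ≤ MMScore P b

/-- Restriction of a profile to a subset `Y` of the alternatives. -/
def Profile.restrict (P : Profile α) (Y : Finset α) : Profile α where
  voters := P.voters
  alts := Y
  rel := fun i a b => P.rel i a b && decide (a ∈ Y) && decide (b ∈ Y)

/-- `P.minus b` is `P` restricted to `X(P) \ {b}`. -/
def Profile.minus (P : Profile α) (b : α) : Profile α :=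
  P.restrict (P.alts.erase b)

/-- The combination `P + Q` of two profiles (used with disjoint voter sets and
the same set of alternatives). -/
def Profile.combine (P Q : Profile α) : Profile α where
  voters := P.voters ∪ Q.voters
  alts := P.alts
  rel := fun i a b => if i ∈ P.voters then P.rel i a b else Q.rel i a b

/-- `2P`: the profile `P` together with a copy of `P` on a disjoint set of voters. -/
def Profile.double (P : Profile α) : Profile α where
  voters := P.voters ∪ P.voters.image fun i => i + (P.voters.sup id + 1)
  alts := P.alts
  rel := fun i a b =>
    if i ∈ P.voters then P.rel i a b else P.rel (i - (P.voters.sup id + 1)) a b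

/-- `r` is (the strict part of) a linear order on the finite set `X`. -/
def IsLinearOn (r : α → α → Bool) (X : Finset α) : Prop :=
  (∀ a ∈ X, r a a = false) ∧
  (∀ a ∈ X, ∀ b ∈ X, ∀ c ∈ X, r a b = true → r b c = true → r a c = true) ∧
  (∀ a ∈ X, ∀ b ∈ X, a ≠ b → (r a b = true ∨ r b a = true)) ∧
  (∀ a ∈ X, ∀ b ∈ X, r a b = true → r b a = false)

/-- `Q` is a block profile for the set `X` of alternatives: it contains, for
each linear order of `X`, exactly one voter submitting that linear order, and
no other voters. -/
def IsBlock (X : Finset α) (Q : Profile α) : Prop :=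
  Q.alts = X ∧
  (∀ i ∈ Q.voters, IsLinearOn (Q.rel i) X) ∧
  (∀ r : α → α → Bool, IsLinearOn r X →
    ∃! i, i ∈ Q.voters ∧ ∀ a ∈ X, ∀ b ∈ X, Q.rel i a b = r a b)

/-- `P'` is obtained from `P` by one voter who ranked `a` uniquely last in `P`
switching to ranking `a` uniquely first in `P'`, with the restriction of that
voter's relation to `X(P) \ {a}` unchanged and all other voters' relations
unchanged. -/
def MoveLastToFirst (P P' : Profile α) (a : α) : Prop :=
  P'.voters = P.voters ∧ P'.alts = P.alts ∧ a ∈ P.alts ∧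
  ∃ i ∈ P.voters,
    (∀ b ∈ P.alts, b ≠ a → P.rel i b a = true) ∧
    (∀ b ∈ P.alts, b ≠ a → P'.rel i a b = true) ∧
    (∀ b ∈ P.alts, b ≠ a → ∀ c ∈ P.alts, c ≠ a → P'.rel i b c = P.rel i b c) ∧
    (∀ j ∈ P.voters, j ≠ i → ∀ x ∈ P.alts, ∀ y ∈ P.alts, P'.rel j x y = P.rel j x y)

/-- `P'` is obtained from `P` by adding one new voter who ranks `a` uniquely
first, all old voters' relations being unchanged. -/
def AddTopVoter (P P' : Profile α) (a : α) : Prop :=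
  P'.alts = P.alts ∧
  ∃ j, j ∉ P.voters ∧ P'.voters = insert j P.voters ∧
    (∀ b ∈ P.alts, b ≠ a → P'.rel j a b = true) ∧
    (∀ i ∈ P.voters, ∀ x ∈ P.alts, ∀ y ∈ P.alts, P'.rel i x y = P.rel i x y)

/-- `P'` is obtained from `P` by one voter improving the position of `a` in
their ballot, while nothing else changes. -/
def ImproveFor (P P' : Profile α) (a : α) : Prop :=
  P'.voters = P.voters ∧ P'.alts = P.alts ∧
  ∃ i ∈ P.voters,
    (∃ b ∈ P.alts, b ≠ a ∧
      ((P.rel i a b = false ∧ P'.rel i a b = true) ∨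
        (P.rel i b a = true ∧ P'.rel i b a = false))) ∧
    (∀ c ∈ P.alts, c ≠ a →
      (P.rel i a c = true → P'.rel i a c = true) ∧
      (P.rel i c a = false → P'.rel i c a = false)) ∧
    (∀ c ∈ P.alts, c ≠ a → ∀ d ∈ P.alts, d ≠ a → P'.rel i c d = P.rel i c d) ∧
    (∀ j ∈ P.voters, j ≠ i → ∀ x ∈ P.alts, ∀ y ∈ P.alts, P'.rel j x y = P.rel j x y)

/-- Anonymity relative to a domain `D` of profiles. -/
def Anonymity (D : Set (Profile α)) (F : Profile α → Finset α) : Prop :=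
  ∀ P ∈ D, ∀ P' ∈ D, P.alts = P'.alts →
    (∃ π : Equiv.Perm ℕ, P.voters.image π = P'.voters ∧
      ∀ i ∈ P.voters, ∀ a ∈ P.alts, ∀ b ∈ P.alts, P.rel i a b = P'.rel (π i) a b) →
    F P = F P'

/-- Neutrality relative to a domain `D` of profiles. -/
def Neutrality (D : Set (Profile α)) (F : Profile α → Finset α) : Prop :=
  ∀ P ∈ D, ∀ P' ∈ D, P.voters = P'.voters →
    ∀ τ : Equiv.Perm α, P.alts.image τ = P'.alts →
      (∀ i ∈ P.voters, ∀ a ∈ P.alts, ∀ b ∈ P.alts, P.rel i a b = P'.rel i (τ a) (τ b)) →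
      (F P).image τ = F P'

/-- Weak positive responsiveness relative to a domain `D` of profiles. -/
def WeakPositiveResponsiveness (D : Set (Profile α)) (F : Profile α → Finset α) : Prop :=
  ∀ P ∈ D, ∀ P' ∈ D, ∀ a ∈ F P, MoveLastToFirst P P' a → F P' = {a}

/-- (Full) positive responsiveness relative to a domain `D` of profiles. -/
def PositiveResponsiveness (D : Set (Profile α)) (F : Profile α → Finset α) : Prop :=
  ∀ P ∈ D, ∀ P' ∈ D, ∀ a ∈ F P, ImproveFor P P' a → F P' = {a}

/-- Positive involvement relative to a domain `D` of profiles. -/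
def PositiveInvolvement (D : Set (Profile α)) (F : Profile α → Finset α) : Prop :=
  ∀ P ∈ D, ∀ P' ∈ D, ∀ a ∈ F P, AddTopVoter P P' a → a ∈ F P'

/-- Near immunity to spoilers relative to a domain `D` of profiles. -/
def NearImmunityToSpoilers (D : Set (Profile α)) (F : Profile α → Finset α) : Prop :=
  ∀ P ∈ D, ∀ a ∈ P.alts, ∀ b ∈ P.alts,
    P.minus b ∈ D → P.restrict {a, b} ∈ D →
    F (P.minus b) = {a} → F (P.restrict {a, b}) = {a} → b ∉ F P → a ∈ F P

/-- Immunity to spoilers relative to a domain `D` of profiles. -/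
def ImmunityToSpoilers (D : Set (Profile α)) (F : Profile α → Finset α) : Prop :=
  ∀ P ∈ D, ∀ a ∈ P.alts, ∀ b ∈ P.alts,
    P.minus b ∈ D → P.restrict {a, b} ∈ D →
    a ∈ F (P.minus b) → F (P.restrict {a, b}) = {a} → b ∉ F P → a ∈ F P

/-- (Inclusion) homogeneity relative to a domain `D` of profiles. -/
def Homogeneity (D : Set (Profile α)) (F : Profile α → Finset α) : Prop :=
  ∀ P ∈ D, P.double ∈ D ∧ F P ⊆ F P.double

/-- Block preservation relative to a domain `D` of profiles. -/
def BlockPreservation (D : Set (Profile α)) (F : Profile α → Finset α) : Prop :=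
  ∀ P ∈ D, ∀ Q ∈ D, Disjoint P.voters Q.voters → IsBlock P.alts Q →
    P.combine Q ∈ D ∧ F P ⊆ F (P.combine Q)

/-- Condorcet consistency relative to a domain `D` of profiles. -/
def CondorcetConsistent (D : Set (Profile α)) (F : Profile α → Finset α) : Prop :=
  ∀ P ∈ D, ∀ c ∈ P.alts, (∀ x ∈ P.alts, x ≠ c → 0 < Margin P c x) → F P = {c}

/-- The domain of all (strict-weak-order) profiles with exactly two alternatives. -/
def Dom2 (α : Type*) : Set (Profile α) :=
  {P | IsSWO P ∧ P.voters.Nonempty ∧ P.alts.card = 2}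

/-- The domain of all profiles with two or three alternatives. -/
def Dom23 (α : Type*) : Set (Profile α) :=
  {P | IsSWO P ∧ P.voters.Nonempty ∧ (P.alts.card = 2 ∨ P.alts.card = 3)}

/-- The domain of all profiles with at least two alternatives. -/
def DomGe2 (α : Type*) : Set (Profile α) :=
  {P | IsSWO P ∧ P.voters.Nonempty ∧ 2 ≤ P.alts.card}

/-- The domain of all profiles. -/
def DomAll (α : Type*) : Set (Profile α) :=
  {P | IsSWO P ∧ P.voters.Nonempty ∧ P.alts.Nonempty}

/-- The support-based Minimax score of `a`: the maximum of `Support P b a`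
over all `b` with a positive margin over `a` (`0` if there is no such `b`). -/
def SupportMMScore (P : Profile α) (a : α) : ℕ :=
  WithBot.unbotD 0 ((((P.alts.erase a).filter fun b => 0 < Margin P b a).image fun b =>
    Support P b a).max)

/-- Support-based Minimax: alternatives with minimal support-based Minimax score. -/
def SupportMinimax (P : Profile α) : Finset α :=
  P.alts.filter fun a => ∀ b ∈ P.alts, SupportMMScore P a ≤ SupportMMScore P b

/-- The set of weak Condorcet winners in `P`. -/
def WeakCondorcetWinners (P : Profile α) : Finset α :=
  P.alts.filter fun a => ∀ x ∈ P.alts, 0 ≤ Margin P a x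

/-- The plurality score of `a`: the number of voters ranking `a` uniquely first. -/
def PluralityScore (P : Profile α) (a : α) : ℕ :=
  (P.voters.filter fun i => ∀ b ∈ P.alts, b ≠ a → P.rel i a b = true).card

/-- The Condorcet-Plurality voting method: the weak Condorcet winners if there
are any; otherwise the alternatives with maximal plurality score. -/
def CP (P : Profile α) : Finset α :=
  if (WeakCondorcetWinners P).Nonempty then WeakCondorcetWinners P
  else P.alts.filter fun a => ∀ b ∈ P.alts, PluralityScore P b ≤ PluralityScore P a

/-- The marginal Borda score of `a`: the sum of the margins of `a` over the
alternatives. -/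
def MarginalBorda (P : Profile α) (a : α) : ℤ :=
  ∑ b ∈ P.alts, Margin P a b

/-- Minimax MB: the Minimax winners with greatest marginal Borda score. -/
def MinimaxMB (P : Profile α) : Finset α :=
  (Minimax P).filter fun a => ∀ b ∈ Minimax P, MarginalBorda P b ≤ MarginalBorda P a

/-- `P` and `P'` have the same ordinal margin graph. -/
def SameOrdinalMarginGraph (P P' : Profile α) : Prop :=
  P.alts = P'.alts ∧
  (∀ a ∈ P.alts, ∀ b ∈ P.alts, (0 < Margin P a b ↔ 0 < Margin P' a b)) ∧
  (∀ a ∈ P.alts, ∀ b ∈ P.alts, ∀ c ∈ P.alts, ∀ d ∈ P.alts,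
    (Margin P c d ≤ Margin P a b ↔ Margin P' c d ≤ Margin P' a b))

/-- Ordinal margin invariance relative to a domain `D` of profiles. -/
def OrdinalMarginInvariance (D : Set (Profile α)) (F : Profile α → Finset α) : Prop :=
  ∀ P ∈ D, ∀ P' ∈ D, SameOrdinalMarginGraph P P' → F P = F P'

/-- `P` is uniquely-weighted: distinct pairs of distinct alternatives have
distinct margins. -/
def UniquelyWeighted (P : Profile α) : Prop :=
  ∀ a ∈ P.alts, ∀ b ∈ P.alts, ∀ c ∈ P.alts, ∀ d ∈ P.alts,
    a ≠ b → c ≠ d → (a, b) ≠ (c, d) → Margin P a b ≠ Margin P c d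

end MayMinimax

/-!
On a balanced three-cycle (`x` beats `y` beats `z` beats `x`, all by the same margin) Minimax
ties all three alternatives. `parityMinimax` breaks that tie in favour of the alternatives whose
support against their unique beater is even. The tie-break depends only on head-to-head
supports, so anonymity and neutrality survive; doubling a profile makes every support even, so
the tie-break then keeps everything and homogeneity survives; weak positive responsiveness,
positive involvement and near immunity to spoilers only ever conclude something about profiles
that are not balanced cycles, where the method is Minimax. Adding one voter for each linear
order of three alternatives adds `3` to every support: the cycle stays balanced but all
parities flip, which breaks block preservation.
-/

namespace MayMinimax

variable {α : Type*}

section Margins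

variable {P P' : Profile α} {a b : α}

def vote (r : α → α → Bool) (a b : α) : ℤ :=
  (if r a b then 1 else 0) - (if r b a then 1 else 0)

lemma vote_swap (r : α → α → Bool) (a b : α) : vote r b a = -vote r a b := by
  unfold vote; ring

lemma neg_one_le_vote (r : α → α → Bool) (a b : α) : -1 ≤ vote r a b := by
  unfold vote; split_ifs <;> norm_num

lemma vote_eq_one {r : α → α → Bool} (hab : r a b = true) (hba : r b a = false) :
    vote r a b = 1 := by
  simp [vote, hab, hba]

lemma margin_eq_support (P : Profile α) (a b : α) :
    Margin P a b = Support P a b - Support P b a := rfl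

lemma margin_swap (P : Profile α) (a b : α) : Margin P b a = -Margin P a b := by
  simp only [margin_eq_support]; ring

lemma margin_eq_sum_vote (P : Profile α) (a b : α) :
    Margin P a b = ∑ i ∈ P.voters, vote (P.rel i) a b := by
  simp only [Margin, vote, Finset.sum_sub_distrib, Finset.card_filter]
  push_cast
  rfl

lemma margin_update_voter {i : ℕ} (hv : P'.voters = P.voters) (hi : i ∈ P.voters)
    (hrel : ∀ j ∈ P.voters, j ≠ i → ∀ x ∈ P.alts, ∀ y ∈ P.alts, P'.rel j x y = P.rel j x y)
    (ha : a ∈ P.alts) (hb : b ∈ P.alts) :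
    Margin P' a b = Margin P a b + (vote (P'.rel i) a b - vote (P.rel i) a b) := by
  have hrest : ∑ j ∈ P.voters.erase i, vote (P'.rel j) a b
      = ∑ j ∈ P.voters.erase i, vote (P.rel j) a b := by
    refine Finset.sum_congr rfl fun j hj => ?_
    obtain ⟨hji, hj⟩ := Finset.mem_erase.mp hj
    simp only [vote, hrel j hj hji a ha b hb, hrel j hj hji b hb a ha]
  rw [margin_eq_sum_vote, margin_eq_sum_vote, hv, ← Finset.add_sum_erase _ _ hi,
    ← Finset.add_sum_erase _ _ hi, hrest]
  ring

lemma margin_insert_voter {j : ℕ} (hj : j ∉ P.voters) (hv : P'.voters = insert j P.voters)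
    (hrel : ∀ i ∈ P.voters, ∀ x ∈ P.alts, ∀ y ∈ P.alts, P'.rel i x y = P.rel i x y)
    (ha : a ∈ P.alts) (hb : b ∈ P.alts) :
    Margin P' a b = Margin P a b + vote (P'.rel j) a b := by
  rw [margin_eq_sum_vote, margin_eq_sum_vote, hv, Finset.sum_insert hj, add_comm]
  congr 1
  refine Finset.sum_congr rfl fun i hi => ?_
  simp only [vote, hrel i hi a ha b hb, hrel i hi b hb a ha]

lemma IsSWO.rel_eq_false (h : IsSWO P) {i : ℕ} (hi : i ∈ P.voters) (ha : a ∈ P.alts)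
    (hb : b ∈ P.alts) (hab : P.rel i a b = true) : P.rel i b a = false :=
  (h i hi).1 a ha b hb hab

end Margins

section Double

variable {P : Profile α} {a b : α}

lemma shift_notMem_voters (P : Profile α) (j : ℕ) : j + (P.voters.sup id + 1) ∉ P.voters :=
  fun h => by have := Finset.le_sup (f := id) h; simp only [id] at this; omega

lemma double_rel_of_mem {i : ℕ} (hi : i ∈ P.voters) : P.double.rel i = P.rel i := by
  simp [Profile.double, hi]

lemma double_rel_shift {j : ℕ} : P.double.rel (j + (P.voters.sup id + 1)) = P.rel j := by
  funext a b
  simp [Profile.double, shift_notMem_voters]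

lemma support_double : Support P.double a b = 2 * Support P a b := by
  have hdisj : Disjoint P.voters (P.voters.image fun i => i + (P.voters.sup id + 1)) :=
    Finset.disjoint_left.mpr fun i hi hi' => by
      obtain ⟨j, -, rfl⟩ := Finset.mem_image.mp hi'
      exact shift_notMem_voters P j hi
  have horig : (P.voters.filter fun i => P.double.rel i a b = true)
      = P.voters.filter fun i => P.rel i a b = true :=
    Finset.filter_congr fun i hi => by rw [double_rel_of_mem hi]
  have hcopy : ((P.voters.image fun i => i + (P.voters.sup id + 1)).filter
      fun i => P.double.rel i a b = true)
      = (P.voters.filter fun i => P.rel i a b = true).image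
          fun i => i + (P.voters.sup id + 1) := by
    rw [Finset.filter_image]
    simp only [double_rel_shift]
  rw [Support, show P.double.voters = _ ∪ _ from rfl, Finset.filter_union,
    Finset.card_union_of_disjoint (Finset.disjoint_filter_filter hdisj), horig, hcopy,
    Finset.card_image_of_injective _ (add_left_injective _), Support]
  ring

lemma margin_double : Margin P.double a b = 2 * Margin P a b := by
  rw [margin_eq_support, margin_eq_support, support_double, support_double]
  push_cast
  ring

lemma isSWO_double (h : IsSWO P) : IsSWO P.double := by
  intro i hi
  rcases Finset.mem_union.mp hi with hi | hi
  · rw [double_rel_of_mem hi]; exact h i hi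
  · obtain ⟨j, hj, rfl⟩ := Finset.mem_image.mp hi
    rw [double_rel_shift]; exact h j hj

end Double

section LinearOrders

variable {r : α → α → Bool} {X : Finset α} {a b : α}

lemma isLinearOn_of_injOn {ρ : α → ℕ} (h : Set.InjOn ρ X) :
    IsLinearOn (fun a b => decide (ρ b < ρ a)) X := by
  refine ⟨fun a _ => by simp, fun a _ b _ c _ hab hbc => ?_, fun a ha b hb hab => ?_,
    fun a _ b _ hab => ?_⟩
  · simp only [decide_eq_true_eq] at hab hbc ⊢
    omega
  · have := (h.ne_iff ha hb).mpr hab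
    simp only [decide_eq_true_eq]
    omega
  · simp only [decide_eq_true_eq, decide_eq_false_iff_not] at hab ⊢
    omega

lemma IsLinearOn.rel_swap (h : IsLinearOn r X) (ha : a ∈ X) (hb : b ∈ X) (hab : a ≠ b) :
    r b a = !r a b := by
  rcases h.2.2.1 a ha b hb hab with h1 | h1
  · simp [h1, h.2.2.2 a ha b hb h1]
  · simp [h1, h.2.2.2 b hb a ha h1]

end LinearOrders

variable [DecidableEq α]

section Minimax

variable {P P' : Profile α} {a b c : α}

lemma support_restrict {Y : Finset α} (ha : a ∈ Y) (hb : b ∈ Y) :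
    Support (P.restrict Y) a b = Support P a b := by
  simp [Support, Profile.restrict, ha, hb]

lemma margin_restrict {Y : Finset α} (ha : a ∈ Y) (hb : b ∈ Y) :
    Margin (P.restrict Y) a b = Margin P a b := by
  rw [margin_eq_support, margin_eq_support, support_restrict ha hb, support_restrict hb ha]

lemma mmScore_eq_sup' (hne : (P.alts.erase a).Nonempty) :
    MMScore P a = (P.alts.erase a).sup' hne fun b => Margin P b a := by
  rw [MMScore, Finset.max_eq_sup_coe, Finset.sup_image, ← Finset.coe_sup' hne]
  rfl

lemma le_mmScore (hb : b ∈ P.alts) (hba : b ≠ a) : Margin P b a ≤ MMScore P a := by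
  have hb' : b ∈ P.alts.erase a := Finset.mem_erase.mpr ⟨hba, hb⟩
  rw [mmScore_eq_sup' ⟨b, hb'⟩]
  exact Finset.le_sup' (fun b => Margin P b a) hb'

lemma mmScore_le (hne : (P.alts.erase a).Nonempty) {t : ℤ}
    (h : ∀ b ∈ P.alts, b ≠ a → Margin P b a ≤ t) : MMScore P a ≤ t := by
  rw [mmScore_eq_sup' hne]
  exact Finset.sup'_le hne _ fun b hb =>
    h b (Finset.mem_of_mem_erase hb) (Finset.ne_of_mem_erase hb)

lemma mmScore_le_mmScore_add (hA : P'.alts = P.alts) (hne : (P.alts.erase a).Nonempty) {k : ℤ}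
    (h : ∀ b ∈ P.alts, b ≠ a → Margin P' b a ≤ Margin P b a + k) :
    MMScore P' a ≤ MMScore P a + k :=
  mmScore_le (hA ▸ hne) fun b hb hba =>
    (h b (hA ▸ hb) hba).trans (by linarith [le_mmScore (hA ▸ hb) hba])

lemma mmScore_of_alts_eq_pair (hA : P.alts = {a, c}) (hac : a ≠ c) :
    MMScore P a = Margin P c a := by
  have hc : c ∈ P.alts := by simp [hA]
  refine le_antisymm (mmScore_le ⟨c, Finset.mem_erase.mpr ⟨hac.symm, hc⟩⟩ fun b hb hba => ?_)
    (le_mmScore hc hac.symm)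
  obtain rfl | rfl : b = a ∨ b = c := by simpa [hA] using hb
  exacts [absurd rfl hba, le_rfl]

lemma mem_minimax : a ∈ Minimax P ↔ a ∈ P.alts ∧ ∀ b ∈ P.alts, MMScore P a ≤ MMScore P b :=
  Finset.mem_filter

lemma minimax_subset (P : Profile α) : Minimax P ⊆ P.alts := Finset.filter_subset _ _

lemma minimax_nonempty (h : P.alts.Nonempty) : (Minimax P).Nonempty := by
  obtain ⟨a, ha, hmin⟩ := Finset.exists_min_image P.alts (MMScore P) h
  exact ⟨a, mem_minimax.mpr ⟨ha, hmin⟩⟩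

lemma minimax_eq_singleton (ha : a ∈ P.alts)
    (h : ∀ b ∈ P.alts, b ≠ a → MMScore P a < MMScore P b) : Minimax P = {a} := by
  refine Finset.eq_singleton_iff_unique_mem.mpr ⟨mem_minimax.mpr ⟨ha, fun b hb => ?_⟩, ?_⟩
  · rcases eq_or_ne b a with rfl | hba
    exacts [le_rfl, (h b hb hba).le]
  · intro b hb
    by_contra hba
    exact (h b (mem_minimax.mp hb).1 hba).not_ge ((mem_minimax.mp hb).2 a ha)

lemma margin_pos_of_minimax_eq_singleton (hA : P.alts = {a, c}) (hac : a ≠ c)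
    (h : Minimax P = {a}) : 0 < Margin P a c := by
  have hc : c ∈ P.alts := by simp [hA]
  have hcmin : c ∉ Minimax P := by simp [h, hac.symm]
  simp only [mem_minimax, hc, true_and, not_forall, not_le] at hcmin
  obtain ⟨w, hw, hlt⟩ := hcmin
  rcases (show w = a ∨ w = c by simpa [hA] using hw) with h | h
  · rw [h, mmScore_of_alts_eq_pair hA hac,
      mmScore_of_alts_eq_pair (Finset.pair_comm a c ▸ hA) hac.symm, margin_swap] at hlt
    linarith
  · exact absurd hlt (h ▸ lt_irrefl _)

lemma mmScore_double : MMScore P.double a = 2 * MMScore P a := by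
  obtain hemp | hne := (P.alts.erase a).eq_empty_or_nonempty
  · simp [MMScore, Profile.double, hemp]
  rw [mmScore_eq_sup' hne, mmScore_eq_sup' (P := P.double) hne,
    Finset.apply_sup'_eq_sup'_comp hne (2 * ·) fun x y => mul_max_of_nonneg x y zero_le_two]
  simp only [Function.comp_def, margin_double]
  rfl

lemma minimax_double : Minimax P.double = Minimax P :=
  Finset.filter_congr fun a _ => forall₂_congr fun b _ => by
    rw [mmScore_double, mmScore_double]
    constructor <;> intro h <;> linarith

end Minimax

section Method

variable {P P' : Profile α} {a b x y z : α}

structure IsBalancedTriangle (P : Profile α) (x y z : α) : Prop where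
  ne_xy : x ≠ y
  ne_xz : x ≠ z
  ne_yz : y ≠ z
  alts_eq : P.alts = {x, y, z}
  margin_pos : 0 < Margin P x y
  margin_yz : Margin P y z = Margin P x y
  margin_zx : Margin P z x = Margin P x y

def IsBalancedCycle (P : Profile α) : Prop :=
  ∃ x y z, IsBalancedTriangle P x y z

def beatenSupport (P : Profile α) (a : α) : ℕ :=
  ∑ u ∈ (P.alts.erase a).filter (fun u => 0 < Margin P u a), Support P a u

lemma IsBalancedTriangle.rotate (h : IsBalancedTriangle P x y z) :
    IsBalancedTriangle P y z x where
  ne_xy := h.ne_yz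
  ne_xz := h.ne_xy.symm
  ne_yz := h.ne_xz.symm
  alts_eq := by rw [h.alts_eq, Finset.insert_comm, Finset.pair_comm]
  margin_pos := h.margin_yz ▸ h.margin_pos
  margin_yz := h.margin_zx.trans h.margin_yz.symm
  margin_zx := h.margin_yz.symm

lemma IsBalancedTriangle.mmScore_eq (h : IsBalancedTriangle P x y z) :
    MMScore P x = Margin P x y := by
  have hz : z ∈ P.alts := by simp [h.alts_eq]
  refine le_antisymm (mmScore_le ⟨z, Finset.mem_erase.mpr ⟨h.ne_xz.symm, hz⟩⟩ fun b hb hbx => ?_)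
    (h.margin_zx ▸ le_mmScore hz h.ne_xz.symm)
  rcases (show b = x ∨ b = y ∨ b = z by simpa [h.alts_eq] using hb) with rfl | rfl | rfl
  · exact absurd rfl hbx
  · linarith [margin_swap P b x, h.margin_pos]
  · exact h.margin_zx.le

lemma IsBalancedTriangle.beatenSupport_eq (h : IsBalancedTriangle P x y z) :
    beatenSupport P x = Support P x z := by
  have hyx : ¬0 < Margin P y x := by linarith [margin_swap P x y, h.margin_pos]
  have hzx : 0 < Margin P z x := h.margin_zx ▸ h.margin_pos
  rw [beatenSupport, h.alts_eq, Finset.erase_insert (by simp [h.ne_xy, h.ne_xz]),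
    Finset.filter_insert, if_neg hyx, Finset.filter_singleton, if_pos hzx, Finset.sum_singleton]

lemma IsBalancedCycle.exists_triangle (h : IsBalancedCycle P) (ha : a ∈ P.alts) :
    ∃ u v, IsBalancedTriangle P a u v := by
  obtain ⟨x, y, z, hT⟩ := h
  rcases (show a = x ∨ a = y ∨ a = z by simpa [hT.alts_eq] using ha) with rfl | rfl | rfl
  exacts [⟨y, z, hT⟩, ⟨z, x, hT.rotate⟩, ⟨x, y, hT.rotate.rotate⟩]

lemma IsBalancedCycle.mmScore_eq (h : IsBalancedCycle P) (ha : a ∈ P.alts) (hb : b ∈ P.alts) :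
    MMScore P a = MMScore P b := by
  obtain ⟨x, y, z, hT⟩ := h
  have key : ∀ c ∈ P.alts, MMScore P c = Margin P x y := by
    intro c hc
    rcases (show c = x ∨ c = y ∨ c = z by simpa [hT.alts_eq] using hc) with rfl | rfl | rfl
    · exact hT.mmScore_eq
    · rw [hT.rotate.mmScore_eq, hT.margin_yz]
    · rw [hT.rotate.rotate.mmScore_eq, hT.margin_zx]
  rw [key a ha, key b hb]

lemma IsBalancedCycle.minimax_eq (h : IsBalancedCycle P) : Minimax P = P.alts :=
  Finset.filter_true_of_mem fun _ ha _ hb => (h.mmScore_eq ha hb).le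

lemma not_isBalancedCycle_of_mmScore_lt (ha : a ∈ P.alts)
    (h : ∀ b ∈ P.alts, b ≠ a → MMScore P a < MMScore P b) : ¬IsBalancedCycle P := by
  intro hC
  obtain ⟨u, v, hT⟩ := hC.exists_triangle ha
  have hu : u ∈ P.alts := by simp [hT.alts_eq]
  exact (h u hu hT.ne_xy.symm).ne (hC.mmScore_eq ha hu)

def parityWinners (P : Profile α) : Finset α :=
  P.alts.filter fun a => Even (beatenSupport P a)

open Classical in
noncomputable def parityMinimax (P : Profile α) : Finset α :=
  if IsBalancedCycle P then
    if (parityWinners P).Nonempty then parityWinners P else P.alts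
  else Minimax P

lemma parityMinimax_of_not_isBalancedCycle (h : ¬IsBalancedCycle P) :
    parityMinimax P = Minimax P := by
  classical
  simp [parityMinimax, h]

lemma parityMinimax_of_isBalancedCycle (h : IsBalancedCycle P) :
    parityMinimax P = if (parityWinners P).Nonempty then parityWinners P else P.alts := by
  classical
  simp [parityMinimax, h]

lemma parityMinimax_subset_minimax (P : Profile α) : parityMinimax P ⊆ Minimax P := by
  unfold parityMinimax
  split_ifs with h
  · exact h.minimax_eq ▸ Finset.filter_subset _ _
  · exact h.minimax_eq.symm.subset
  · exact subset_rfl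

lemma parityMinimax_subset_alts (P : Profile α) : parityMinimax P ⊆ P.alts :=
  (parityMinimax_subset_minimax P).trans (minimax_subset P)

lemma parityMinimax_nonempty (h : P.alts.Nonempty) : (parityMinimax P).Nonempty := by
  unfold parityMinimax
  split_ifs with hC hne
  exacts [hne, h, minimax_nonempty h]

lemma parityMinimax_eq_singleton (ha : a ∈ P.alts)
    (h : ∀ b ∈ P.alts, b ≠ a → MMScore P a < MMScore P b) : parityMinimax P = {a} := by
  rw [parityMinimax_of_not_isBalancedCycle (not_isBalancedCycle_of_mmScore_lt ha h),
    minimax_eq_singleton ha h]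

lemma beatenSupport_double : beatenSupport P.double a = 2 * beatenSupport P a := by
  simp only [beatenSupport, Finset.mul_sum, support_double, margin_double]
  refine Finset.sum_congr (Finset.filter_congr fun _ _ => ?_) fun _ _ => rfl
  constructor <;> intro h <;> linarith

lemma isBalancedCycle_double_iff : IsBalancedCycle P.double ↔ IsBalancedCycle P := by
  refine exists₃_congr fun x y z => ⟨fun h => ?_, fun h => ?_⟩
  · have h1 := h.margin_pos; have h2 := h.margin_yz; have h3 := h.margin_zx
    simp only [margin_double] at h1 h2 h3
    exact ⟨h.ne_xy, h.ne_xz, h.ne_yz, h.alts_eq, by linarith, by linarith, by linarith⟩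
  · refine ⟨h.ne_xy, h.ne_xz, h.ne_yz, h.alts_eq, ?_, ?_, ?_⟩ <;> simp only [margin_double]
    · linarith [h.margin_pos]
    · rw [h.margin_yz]
    · rw [h.margin_zx]

end Method

section Relabeling

variable {τ : Equiv.Perm α} {P P' : Profile α} {a b : α}

structure IsSupportRelabeling (τ : Equiv.Perm α) (P P' : Profile α) : Prop where
  alts_eq : P'.alts = P.alts.image τ
  support_eq : ∀ a ∈ P.alts, ∀ b ∈ P.alts, Support P' (τ a) (τ b) = Support P a b

namespace IsSupportRelabeling

variable (h : IsSupportRelabeling τ P P')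
include h

lemma symm : IsSupportRelabeling τ.symm P' P where
  alts_eq := by simp [h.alts_eq, Finset.image_image]
  support_eq := by
    simp only [h.alts_eq, Finset.forall_mem_image, Equiv.symm_apply_apply]
    exact fun a ha b hb => (h.support_eq a ha b hb).symm

lemma margin_eq (ha : a ∈ P.alts) (hb : b ∈ P.alts) : Margin P' (τ a) (τ b) = Margin P a b := by
  rw [margin_eq_support, margin_eq_support, h.support_eq a ha b hb, h.support_eq b hb a ha]

lemma erase_eq (a : α) : P'.alts.erase (τ a) = (P.alts.erase a).image τ := by
  rw [h.alts_eq, Finset.image_erase τ.injective]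

lemma mmScore_eq (ha : a ∈ P.alts) : MMScore P' (τ a) = MMScore P a := by
  unfold MMScore
  rw [h.erase_eq, Finset.image_image]
  congr 2
  exact Finset.image_congr fun b hb => h.margin_eq (Finset.mem_of_mem_erase hb) ha

lemma minimax_eq : Minimax P' = (Minimax P).image τ := by
  unfold Minimax
  rw [h.alts_eq, Finset.filter_image]
  congr 1
  refine Finset.filter_congr fun a ha => ?_
  simp only [Finset.forall_mem_image, h.mmScore_eq ha]
  exact forall₂_congr fun b hb => by rw [h.mmScore_eq hb]

lemma beatenSupport_eq (ha : a ∈ P.alts) : beatenSupport P' (τ a) = beatenSupport P a := by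
  unfold beatenSupport
  rw [h.erase_eq, Finset.filter_image, Finset.sum_image τ.injective.injOn]
  refine Finset.sum_congr (Finset.filter_congr fun u hu => ?_) fun u hu => ?_
  · rw [h.margin_eq (Finset.mem_of_mem_erase hu) ha]
  · exact h.support_eq a ha u (Finset.mem_of_mem_erase (Finset.mem_of_mem_filter u hu))

lemma parityWinners_eq : parityWinners P' = (parityWinners P).image τ := by
  unfold parityWinners
  rw [h.alts_eq, Finset.filter_image]
  exact congrArg _ (Finset.filter_congr fun a ha => by rw [h.beatenSupport_eq ha])

lemma isBalancedCycle (hC : IsBalancedCycle P) : IsBalancedCycle P' := by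
  obtain ⟨x, y, z, hT⟩ := hC
  have hx : x ∈ P.alts := by simp [hT.alts_eq]
  have hy : y ∈ P.alts := by simp [hT.alts_eq]
  have hz : z ∈ P.alts := by simp [hT.alts_eq]
  exact ⟨τ x, τ y, τ z,
    { ne_xy := τ.injective.ne hT.ne_xy
      ne_xz := τ.injective.ne hT.ne_xz
      ne_yz := τ.injective.ne hT.ne_yz
      alts_eq := by simp [h.alts_eq, hT.alts_eq, Finset.image_insert]
      margin_pos := h.margin_eq hx hy ▸ hT.margin_pos
      margin_yz := by rw [h.margin_eq hy hz, h.margin_eq hx hy, hT.margin_yz]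
      margin_zx := by rw [h.margin_eq hz hx, h.margin_eq hx hy, hT.margin_zx] }⟩

lemma parityMinimax_eq : parityMinimax P' = (parityMinimax P).image τ := by
  by_cases hC : IsBalancedCycle P
  · rw [parityMinimax_of_isBalancedCycle hC,
      parityMinimax_of_isBalancedCycle (h.isBalancedCycle hC), h.parityWinners_eq]
    simp only [Finset.image_nonempty]
    split_ifs
    exacts [rfl, h.alts_eq]
  · have hC' : ¬IsBalancedCycle P' := fun hC' => hC (by simpa using h.symm.isBalancedCycle hC')
    rw [parityMinimax_of_not_isBalancedCycle hC, parityMinimax_of_not_isBalancedCycle hC',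
      h.minimax_eq]

end IsSupportRelabeling

end Relabeling

section Axioms

variable {P P' : Profile α} {a c : α}

lemma exists_eq_pair_of_card_eq_two {s : Finset α} (hs : s.card = 2) (ha : a ∈ s) :
    ∃ c, a ≠ c ∧ s = {a, c} := by
  obtain ⟨x, y, hxy, rfl⟩ := Finset.card_eq_two.mp hs
  rcases (show a = x ∨ a = y by simpa using ha) with rfl | rfl
  exacts [⟨y, hxy, rfl⟩, ⟨x, hxy.symm, Finset.pair_comm _ _⟩]

lemma erase_nonempty_of_mem_dom23 (hP : P ∈ Dom23 α) (ha : a ∈ P.alts) :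
    (P.alts.erase a).Nonempty := by
  rw [← Finset.card_pos, Finset.card_erase_of_mem ha]
  have := hP.2.2
  omega

lemma IsBalancedCycle.card_alts (h : IsBalancedCycle P) : P.alts.card = 3 := by
  obtain ⟨x, y, z, hT⟩ := h
  exact Finset.card_eq_three.mpr ⟨x, y, z, hT.ne_xy, hT.ne_xz, hT.ne_yz, hT.alts_eq⟩

lemma parityMinimax_of_card_ne_three (h : P.alts.card ≠ 3) : parityMinimax P = Minimax P :=
  parityMinimax_of_not_isBalancedCycle fun hC => h hC.card_alts

lemma margin_pos_of_parityMinimax_eq_singleton (hA : P.alts = {a, c}) (hac : a ≠ c)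
    (h : parityMinimax P = {a}) : 0 < Margin P a c :=
  margin_pos_of_minimax_eq_singleton hA hac
    ((parityMinimax_of_card_ne_three (by simp [hA, hac])).symm.trans h)

lemma parityMinimax_eq_singleton_of_forall_margin_pos (ha : a ∈ P.alts)
    (h : ∀ b ∈ P.alts, b ≠ a → 0 < Margin P a b) : parityMinimax P = {a} := by
  refine parityMinimax_eq_singleton ha fun w hw hwa => ?_
  have ha_lt : MMScore P a < 0 :=
    (mmScore_le ⟨w, Finset.mem_erase.mpr ⟨hwa, hw⟩⟩ (t := -1) fun b hb hba => by
      linarith [margin_swap P a b, h b hb hba]).trans_lt (by norm_num)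
  linarith [le_mmScore ha hwa.symm, h w hw hwa]

lemma not_isBalancedCycle_of_margin_sub_one (hA : P'.alts = P.alts) (ha : a ∈ Minimax P)
    (hdrop : ∀ b ∈ P.alts, b ≠ a → Margin P' b a = Margin P b a - 1)
    (hlower : ∀ b ∈ P.alts, ∀ c ∈ P.alts, Margin P b c ≤ Margin P' b c + 1) :
    ¬IsBalancedCycle P' := by
  intro hC
  obtain ⟨haA, hmin⟩ := mem_minimax.mp ha
  obtain ⟨u, v, hT⟩ := hC.exists_triangle (hA ▸ haA)
  have hu : u ∈ P.alts := hA ▸ by simp [hT.alts_eq]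
  have hv : v ∈ P.alts := hA ▸ by simp [hT.alts_eq]
  -- With `m` the margin of the cycle in `P'`: in `P`, `v` beat `a` by `m + 1`, while `u` had
  -- Minimax score at most `m - 1`.
  have ha_score : Margin P' v a + 1 ≤ MMScore P a := by
    linarith [hdrop v hv hT.ne_xz.symm, le_mmScore hv hT.ne_xz.symm]
  have hu_score : MMScore P u ≤ Margin P' a u - 1 := by
    refine mmScore_le ⟨a, Finset.mem_erase.mpr ⟨hT.ne_xy, haA⟩⟩ fun b hb hbu => ?_
    rcases (show b = a ∨ b = u ∨ b = v by simpa [← hA, hT.alts_eq] using hb) with rfl | rfl | rfl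
    · linarith [hdrop u hu hT.ne_xy.symm, margin_swap P b u, margin_swap P' b u]
    · exact absurd rfl hbu
    · linarith [hlower b hv u hu, margin_swap P' u b, hT.margin_yz, hT.margin_pos]
  linarith [hmin u hu, hT.margin_zx]

theorem parityMinimax_anonymity (D : Set (Profile α)) : Anonymity D parityMinimax := by
  rintro P - P' - hA ⟨π, himg, hrel⟩
  have h : IsSupportRelabeling (Equiv.refl α) P P' :=
    { alts_eq := by simp [hA]
      support_eq := fun a ha b hb => by
        simp only [Equiv.refl_apply, Support, ← himg, Finset.filter_image,
          Finset.card_image_of_injective _ π.injective]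
        exact congrArg _ (Finset.filter_congr fun i hi => by
          rw [hrel i hi a ha b hb]) }
  simpa using h.parityMinimax_eq.symm

theorem parityMinimax_neutrality (D : Set (Profile α)) : Neutrality D parityMinimax := by
  rintro P - P' - hV τ hA hrel
  have h : IsSupportRelabeling τ P P' :=
    { alts_eq := hA.symm
      support_eq := fun a ha b hb => by
        simp only [Support, ← hV]
        exact congrArg _ (Finset.filter_congr fun i hi => by rw [hrel i hi a ha b hb]) }
  exact h.parityMinimax_eq.symm

theorem parityMinimax_homogeneity : Homogeneity (Dom23 α) parityMinimax := by
  intro P hP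
  have hvoters : P.double.voters.Nonempty := by
    obtain ⟨i, hi⟩ := hP.2.1
    exact ⟨i, Finset.mem_union_left _ hi⟩
  refine ⟨⟨isSWO_double hP.1, hvoters, hP.2.2⟩, ?_⟩
  by_cases hC : IsBalancedCycle P
  · have hall : parityWinners P.double = P.alts :=
      Finset.filter_true_of_mem fun a _ => by rw [beatenSupport_double]; exact even_two_mul _
    have hne : P.alts.Nonempty := Finset.card_pos.mp (by have := hP.2.2; omega)
    rw [parityMinimax_of_isBalancedCycle (isBalancedCycle_double_iff.mpr hC), hall, if_pos hne]
    exact parityMinimax_subset_alts P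
  · rw [parityMinimax_of_not_isBalancedCycle hC,
      parityMinimax_of_not_isBalancedCycle (mt isBalancedCycle_double_iff.mp hC), minimax_double]

theorem parityMinimax_weakPositiveResponsiveness :
    WeakPositiveResponsiveness (Dom23 α) parityMinimax := by
  rintro P hP P' hP' a haF ⟨hV, hA, haA, i, hi, hlast, hfirst, hsame, hothers⟩
  have hmin := (mem_minimax.mp (parityMinimax_subset_minimax P haF)).2
  have hdrop : ∀ b ∈ P.alts, b ≠ a → Margin P' b a = Margin P b a - 2 := by
    intro b hb hba
    have hbefore : vote (P.rel i) b a = 1 :=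
      vote_eq_one (hlast b hb hba) (hP.1.rel_eq_false hi hb haA (hlast b hb hba))
    have hafter : vote (P'.rel i) a b = 1 :=
      vote_eq_one (hfirst b hb hba)
        (hP'.1.rel_eq_false (hV ▸ hi) (hA ▸ haA) (hA ▸ hb) (hfirst b hb hba))
    rw [margin_update_voter hV hi hothers hb haA, hbefore, vote_swap, hafter]
    ring
  have hrise : ∀ b ∈ P'.alts, ∀ c ∈ P.alts, c ≠ a → Margin P b c ≤ Margin P' b c + 0 := by
    intro b hb c hc hca
    rcases eq_or_ne b a with rfl | hba
    · linarith [hdrop c hc hca, margin_swap P c b, margin_swap P' c b]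
    · rw [margin_update_voter hV hi hothers (hA ▸ hb) hc]
      simp [vote, hsame b (hA ▸ hb) hba c hc hca, hsame c hc hca b (hA ▸ hb) hba]
  refine parityMinimax_eq_singleton (hA ▸ haA) fun w hw hwa => ?_
  have hw' : w ∈ P.alts := hA ▸ hw
  calc MMScore P' a ≤ MMScore P a + -2 :=
        mmScore_le_mmScore_add hA (erase_nonempty_of_mem_dom23 hP haA)
          fun b hb hba => by rw [hdrop b hb hba]; linarith
    _ < MMScore P w := by linarith [hmin w hw']
    _ ≤ MMScore P' w + 0 :=
        mmScore_le_mmScore_add hA.symm (erase_nonempty_of_mem_dom23 hP' hw)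
          fun b hb hbw => hrise b hb w hw' hwa
    _ = MMScore P' w := add_zero _

theorem parityMinimax_positiveInvolvement : PositiveInvolvement (Dom23 α) parityMinimax := by
  rintro P hP P' hP' a haF ⟨hA, j, hj, hV, htop, hold⟩
  have ha := parityMinimax_subset_minimax P haF
  obtain ⟨haA, hmin⟩ := mem_minimax.mp ha
  have hdrop : ∀ b ∈ P.alts, b ≠ a → Margin P' b a = Margin P b a - 1 := by
    intro b hb hba
    have hj' : j ∈ P'.voters := hV ▸ Finset.mem_insert_self j P.voters
    rw [margin_insert_voter hj hV hold hb haA, vote_swap, vote_eq_one (htop b hb hba)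
      (hP'.1.rel_eq_false hj' (hA ▸ haA) (hA ▸ hb) (htop b hb hba))]
    ring
  have hlower : ∀ b ∈ P.alts, ∀ c ∈ P.alts, Margin P b c ≤ Margin P' b c + 1 :=
    fun b hb c hc => by
      linarith [margin_insert_voter hj hV hold hb hc, neg_one_le_vote (P'.rel j) b c]
  rw [parityMinimax_of_not_isBalancedCycle
    (not_isBalancedCycle_of_margin_sub_one hA ha hdrop hlower)]
  refine mem_minimax.mpr ⟨hA ▸ haA, fun w hw => ?_⟩
  have hw' : w ∈ P.alts := hA ▸ hw
  have ha_score : MMScore P' a ≤ MMScore P a + -1 :=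
    mmScore_le_mmScore_add hA (erase_nonempty_of_mem_dom23 hP haA)
      fun b hb hba => by rw [hdrop b hb hba]; linarith
  have hw_score : MMScore P w ≤ MMScore P' w + 1 :=
    mmScore_le_mmScore_add hA.symm (erase_nonempty_of_mem_dom23 hP' hw)
      fun b hb _ => hlower b (hA ▸ hb) w hw'
  linarith [hmin w hw']

theorem parityMinimax_nearImmunityToSpoilers :
    NearImmunityToSpoilers (Dom23 α) parityMinimax := by
  intro P hP a haA b hbA hmD hrD hFm hFr _
  have hab : a ≠ b := by
    rintro rfl
    simpa [Profile.restrict] using hrD.2.2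
  have hcard : (P.alts.erase b).card = 2 := by
    have h3 := hP.2.2
    have h23 := hmD.2.2
    simp only [Profile.minus, Profile.restrict] at h23
    rw [Finset.card_erase_of_mem hbA] at h23 ⊢
    omega
  obtain ⟨c, hac, hpair⟩ := exists_eq_pair_of_card_eq_two hcard (Finset.mem_erase.mpr ⟨hab, haA⟩)
  have hpos_b : 0 < Margin P a b := by
    simpa [margin_restrict] using margin_pos_of_parityMinimax_eq_singleton rfl hab hFr
  have hpos_c : 0 < Margin P a c := by
    have := margin_pos_of_parityMinimax_eq_singleton hpair hac hFm
    rwa [Profile.minus, margin_restrict (by simp [hpair]) (by simp [hpair])] at this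
  refine (parityMinimax_eq_singleton_of_forall_margin_pos haA fun w hw hwa => ?_).symm ▸
    Finset.mem_singleton_self a
  rcases eq_or_ne w b with rfl | hwb
  · exact hpos_b
  · obtain rfl | rfl : w = a ∨ w = c := by simpa [hpair] using Finset.mem_erase.mpr ⟨hwb, hw⟩
    exacts [absurd rfl hwa, hpos_c]

end Axioms

section LinearOrdersOnThree

variable {r s : α → α → Bool} {x y z : α}

lemma IsLinearOn.eq_of_key_eq (hr : IsLinearOn r {x, y, z}) (hs : IsLinearOn s {x, y, z})
    (hxy : x ≠ y) (hxz : x ≠ z) (hyz : y ≠ z)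
    (h : (r x y, r x z, r y z) = (s x y, s x z, s y z)) :
    ∀ a ∈ ({x, y, z} : Finset α), ∀ b ∈ ({x, y, z} : Finset α), r a b = s a b := by
  simp only [Prod.mk.injEq] at h
  obtain ⟨h1, h2, h3⟩ := h
  intro a ha b hb
  simp only [Finset.mem_insert, Finset.mem_singleton] at ha hb
  rcases ha with rfl | rfl | rfl <;> rcases hb with rfl | rfl | rfl
  all_goals first
    | rw [hr.1 _ (by simp), hs.1 _ (by simp)]
    | assumption
    | rw [hr.rel_swap (by simp) (by simp) (by assumption),
        hs.rel_swap (by simp) (by simp) (by assumption)]; simp [*]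

lemma IsLinearOn.key_ne (hr : IsLinearOn r {x, y, z}) (hxy : x ≠ y) :
    (r x y, r x z, r y z) ≠ (true, false, true) ∧ (r x y, r x z, r y z) ≠ (false, true, false) := by
  have hx : x ∈ ({x, y, z} : Finset α) := by simp
  have hy : y ∈ ({x, y, z} : Finset α) := by simp
  have hz : z ∈ ({x, y, z} : Finset α) := by simp
  refine ⟨fun h => ?_, fun h => ?_⟩ <;> simp only [Prod.mk.injEq] at h
  · simpa [h.2.1] using hr.2.1 x hx y hy z hz h.1 h.2.2
  · have hyx : r y x = true := by simp [hr.rel_swap hx hy hxy, h.1]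
    simpa [h.2.2] using hr.2.1 y hy x hx z hz hyx h.2.1

end LinearOrdersOnThree

section Counterexample

/-- Voter `i` ranks three alternatives `x, y, z` by the scores `ballotRanks i` (higher is
better). Voters `0`–`4` make `x → y → z → x` a cycle with all margins one, voters `5`–`10`
cast the six linear orders. -/
def ballotRanks : ℕ → ℕ × ℕ × ℕ
  | 0 => (2, 1, 0)
  | 1 => (0, 2, 1)
  | 2 => (1, 0, 2)
  | 3 => (1, 0, 0)
  | 4 => (0, 1, 1)
  | 5 => (2, 1, 0)
  | 6 => (2, 0, 1)
  | 7 => (1, 2, 0)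
  | 8 => (0, 2, 1)
  | 9 => (1, 0, 2)
  | _ => (0, 1, 2)

def blockVoters : Finset ℕ := {5, 6, 7, 8, 9, 10}

lemma ballotRanks_block_injective :
    ∀ i ∈ blockVoters, (ballotRanks i).1 ≠ (ballotRanks i).2.1 ∧
      (ballotRanks i).1 ≠ (ballotRanks i).2.2 ∧ (ballotRanks i).2.1 ≠ (ballotRanks i).2.2 := by
  decide

lemma ballotRanks_block_unique (k : Bool × Bool × Bool) (h₁ : k ≠ (true, false, true))
    (h₂ : k ≠ (false, true, false)) :
    ∃ i ∈ blockVoters, (decide ((ballotRanks i).2.1 < (ballotRanks i).1),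
        decide ((ballotRanks i).2.2 < (ballotRanks i).1),
        decide ((ballotRanks i).2.2 < (ballotRanks i).2.1)) = k ∧
      ∀ j ∈ blockVoters, (decide ((ballotRanks j).2.1 < (ballotRanks j).1),
        decide ((ballotRanks j).2.2 < (ballotRanks j).1),
        decide ((ballotRanks j).2.2 < (ballotRanks j).2.1)) = k → j = i := by
  revert k
  decide

variable {x y z : α}

def rankOf (x y : α) (s : ℕ × ℕ × ℕ) (a : α) : ℕ :=
  if a = x then s.1 else if a = y then s.2.1 else s.2.2

def rankProfile (x y z : α) (V : Finset ℕ) : Profile α where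
  voters := V
  alts := {x, y, z}
  rel i a b := decide (rankOf x y (ballotRanks i) b < rankOf x y (ballotRanks i) a)

lemma combine_rankProfile (V W : Finset ℕ) :
    (rankProfile x y z V).combine (rankProfile x y z W) = rankProfile x y z (V ∪ W) := by
  simp only [Profile.combine, rankProfile]
  congr 1
  funext i a b
  exact ite_self _

lemma support_rankProfile (V : Finset ℕ) (a b : α) :
    Support (rankProfile x y z V) a b
      = (V.filter fun i => rankOf x y (ballotRanks i) b < rankOf x y (ballotRanks i) a).card := by
  simp [Support, rankProfile]

lemma rankOf_left (s : ℕ × ℕ × ℕ) : rankOf x y s x = s.1 := if_pos rfl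

lemma rankOf_middle (hxy : x ≠ y) (s : ℕ × ℕ × ℕ) : rankOf x y s y = s.2.1 := by
  simp [rankOf, hxy.symm]

lemma rankOf_right (hxz : x ≠ z) (hyz : y ≠ z) (s : ℕ × ℕ × ℕ) : rankOf x y s z = s.2.2 := by
  simp [rankOf, hxz.symm, hyz.symm]

lemma isBalancedTriangle_rankProfile (hxy : x ≠ y) (hxz : x ≠ z) (hyz : y ≠ z) {V : Finset ℕ}
    (hV : V = Finset.range 5 ∨ V = Finset.range 11) :
    IsBalancedTriangle (rankProfile x y z V) x y z := by
  refine ⟨hxy, hxz, hyz, rfl, ?_, ?_, ?_⟩ <;>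
    simp only [margin_eq_support, support_rankProfile, rankOf_left, rankOf_middle hxy,
      rankOf_right hxz hyz] <;>
    rcases hV with rfl | rfl <;> decide

lemma isSWO_rankProfile (V : Finset ℕ) : IsSWO (rankProfile x y z V) := by
  refine fun i _ => ⟨fun a _ b _ hab => ?_, fun a _ b _ c _ hab hbc => ?_⟩ <;>
    simp only [rankProfile, decide_eq_true_eq, decide_eq_false_iff_not] at * <;> omega

lemma rankProfile_mem_dom23 (hxy : x ≠ y) (hxz : x ≠ z) (hyz : y ≠ z) {V : Finset ℕ}
    (hV : V.Nonempty) : rankProfile x y z V ∈ Dom23 α :=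
  ⟨isSWO_rankProfile V, hV, Or.inr (Finset.card_eq_three.mpr ⟨x, y, z, hxy, hxz, hyz, rfl⟩)⟩

lemma injOn_rankOf (hxy : x ≠ y) (hxz : x ≠ z) (hyz : y ≠ z) {s : ℕ × ℕ × ℕ}
    (h : s.1 ≠ s.2.1 ∧ s.1 ≠ s.2.2 ∧ s.2.1 ≠ s.2.2) :
    Set.InjOn (rankOf x y s) ({x, y, z} : Finset α) := by
  intro a ha b hb hab
  simp only [Finset.coe_insert, Finset.coe_singleton, Set.mem_insert_iff,
    Set.mem_singleton_iff] at ha hb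
  rcases ha with rfl | rfl | rfl <;> rcases hb with rfl | rfl | rfl <;>
    simp_all [rankOf_left, rankOf_middle, rankOf_right]

lemma isBlock_rankProfile (hxy : x ≠ y) (hxz : x ≠ z) (hyz : y ≠ z) :
    IsBlock {x, y, z} (rankProfile x y z blockVoters) := by
  have hlin : ∀ i ∈ blockVoters, IsLinearOn ((rankProfile x y z blockVoters).rel i) {x, y, z} :=
    fun i hi => isLinearOn_of_injOn (injOn_rankOf hxy hxz hyz (ballotRanks_block_injective i hi))
  have hkey : ∀ i, ((rankProfile x y z blockVoters).rel i x y,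
      (rankProfile x y z blockVoters).rel i x z, (rankProfile x y z blockVoters).rel i y z)
      = (decide ((ballotRanks i).2.1 < (ballotRanks i).1),
        decide ((ballotRanks i).2.2 < (ballotRanks i).1),
        decide ((ballotRanks i).2.2 < (ballotRanks i).2.1)) := fun i => by
    simp only [rankProfile, rankOf_left, rankOf_middle hxy, rankOf_right hxz hyz]
  refine ⟨rfl, hlin, fun r hr => ?_⟩
  obtain ⟨i, hi, hik, huniq⟩ :=
    ballotRanks_block_unique _ (hr.key_ne hxy).1 (hr.key_ne hxy).2
  refine ⟨i, ⟨hi, (hlin i hi).eq_of_key_eq hr hxy hxz hyz ((hkey i).trans hik)⟩,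
    fun j ⟨hj, hjr⟩ => huniq j hj ?_⟩
  rw [← hkey j, hjr x (by simp) y (by simp), hjr x (by simp) z (by simp),
    hjr y (by simp) z (by simp)]

lemma parityWinners_rankProfile (hxy : x ≠ y) (hxz : x ≠ z) (hyz : y ≠ z) :
    x ∈ parityWinners (rankProfile x y z (Finset.range 5)) ∧
      z ∉ parityWinners (rankProfile x y z (Finset.range 5)) ∧
      x ∉ parityWinners (rankProfile x y z (Finset.range 11)) ∧
      z ∈ parityWinners (rankProfile x y z (Finset.range 11)) := by
  have h5 := isBalancedTriangle_rankProfile hxy hxz hyz (V := Finset.range 5) (Or.inl rfl)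
  have h11 := isBalancedTriangle_rankProfile hxy hxz hyz (V := Finset.range 11) (Or.inr rfl)
  simp only [parityWinners, Finset.mem_filter, h5.beatenSupport_eq,
    h5.rotate.rotate.beatenSupport_eq, h11.beatenSupport_eq, h11.rotate.rotate.beatenSupport_eq,
    support_rankProfile, rankOf_left, rankOf_middle hxy, rankOf_right hxz hyz]
  simp only [rankProfile, Finset.mem_insert, Finset.mem_singleton, true_or, or_true, true_and]
  decide

lemma parityMinimax_rankProfile (hxy : x ≠ y) (hxz : x ≠ z) (hyz : y ≠ z) :
    x ∈ parityMinimax (rankProfile x y z (Finset.range 5)) ∧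
      z ∉ parityMinimax (rankProfile x y z (Finset.range 5)) ∧
      x ∉ parityMinimax (rankProfile x y z (Finset.range 11)) := by
  obtain ⟨hx5, hz5, hx11, hz11⟩ := parityWinners_rankProfile hxy hxz hyz
  rw [parityMinimax_of_isBalancedCycle ⟨x, y, z, isBalancedTriangle_rankProfile hxy hxz hyz
      (Or.inl rfl)⟩, if_pos ⟨x, hx5⟩,
    parityMinimax_of_isBalancedCycle ⟨x, y, z, isBalancedTriangle_rankProfile hxy hxz hyz
      (Or.inr rfl)⟩, if_pos ⟨z, hz11⟩]
  exact ⟨hx5, hz5, hx11⟩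

theorem parityMinimax_not_blockPreservation (hxy : x ≠ y) (hxz : x ≠ z) (hyz : y ≠ z) :
    ¬BlockPreservation (Dom23 α) parityMinimax := by
  intro hBP
  obtain ⟨hx5, -, hx11⟩ := parityMinimax_rankProfile hxy hxz hyz
  have hdisj : Disjoint (rankProfile x y z (Finset.range 5)).voters
      (rankProfile x y z blockVoters).voters := by
    show Disjoint (Finset.range 5) blockVoters
    decide
  have := (hBP _ (rankProfile_mem_dom23 hxy hxz hyz (by decide)) _
    (rankProfile_mem_dom23 hxy hxz hyz (by decide)) hdisj (isBlock_rankProfile hxy hxz hyz)).2 hx5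
  rw [combine_rankProfile, show Finset.range 5 ∪ blockVoters = Finset.range 11 by decide] at this
  exact hx11 this

theorem parityMinimax_ne_minimax (hxy : x ≠ y) (hxz : x ≠ z) (hyz : y ≠ z) :
    parityMinimax (rankProfile x y z (Finset.range 5))
      ≠ Minimax (rankProfile x y z (Finset.range 5)) := by
  intro h
  refine (parityMinimax_rankProfile hxy hxz hyz).2.1 (h ▸ ?_)
  rw [IsBalancedCycle.minimax_eq ⟨x, y, z, isBalancedTriangle_rankProfile hxy hxz hyz
    (Or.inl rfl)⟩]
  simp [rankProfile]

end Counterexample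

/-- Independence of block preservation: there is a voting method on the domain
of profiles with two or three alternatives satisfying all of the axioms of the
main theorem except block preservation, which it violates, and which differs
from Minimax on some profile. -/
theorem block_preservation_is_independent {α : Type*} [DecidableEq α]
    (hX : ∃ x y z : α, x ≠ y ∧ x ≠ z ∧ y ≠ z) :
    ∃ F : Profile α → Finset α,
      (∀ P ∈ Dom23 α, (F P).Nonempty ∧ F P ⊆ P.alts) ∧
      Anonymity (Dom23 α) F ∧
      Neutrality (Dom23 α) F ∧
      WeakPositiveResponsiveness (Dom23 α) F ∧
      PositiveInvolvement (Dom23 α) F ∧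
      NearImmunityToSpoilers (Dom23 α) F ∧
      Homogeneity (Dom23 α) F ∧
      ¬ BlockPreservation (Dom23 α) F ∧
      ∃ P ∈ Dom23 α, F P ≠ Minimax P := by
  obtain ⟨x, y, z, hxy, hxz, hyz⟩ := hX
  refine ⟨parityMinimax, fun P hP => ⟨parityMinimax_nonempty ?_, parityMinimax_subset_alts P⟩,
    parityMinimax_anonymity _, parityMinimax_neutrality _,
    parityMinimax_weakPositiveResponsiveness, parityMinimax_positiveInvolvement,
    parityMinimax_nearImmunityToSpoilers, parityMinimax_homogeneity,
    parityMinimax_not_blockPreservation hxy hxz hyz, rankProfile x y z (Finset.range 5),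
    rankProfile_mem_dom23 hxy hxz hyz (by decide), parityMinimax_ne_minimax hxy hxz hyz⟩
  exact Finset.card_pos.mp (by have := hP.2.2; omega)

end MayMinimax
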